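/- arXiv:1003.2044 — 2 statements merged into one kernel-verified Lean document; each statement's English description precedes it below -/
import Mathlib

section
/- Let {x, x₁} be a Bertrand D-pair with constant λ ≠ 0, correspondence s and angle function θ. Then for every s₁ the geodesic curvatures and geodesic torsions satisfy k_g(s(s₁)) − k_{g₁}(s₁) = λ (k_g(s(s₁)) k_{g₁}(s₁) − τ_g(s(s₁)) τ_{g₁}(s₁)). -/
open scoped ContDiff

noncomputable section

abbrev E3 := EuclideanSpace ℝ (Fin 3)

/-- Cross product on `EuclideanSpace ℝ (Fin 3)`. -/
def cross3 (a b : E3) : E3 :=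
  WithLp.toLp 2 ![a 1 * b 2 - a 2 * b 1, a 2 * b 0 - a 0 * b 2, a 0 * b 1 - a 1 * b 0]

/-- Darboux frame vector `g = n × T`, where `T = x'`. -/
def gvec (x n : ℝ → E3) : ℝ → E3 := fun t => cross3 (n t) (deriv x t)

/-- Geodesic curvature `k_g = ⟪T', g⟫`. -/
def geodCurv (x n : ℝ → E3) : ℝ → ℝ := fun t => (inner ℝ (deriv (deriv x) t) (gvec x n t) : ℝ)

/-- Normal curvature `k_n = ⟪T', n⟫`. -/
def normCurv (x n : ℝ → E3) : ℝ → ℝ := fun t => (inner ℝ (deriv (deriv x) t) (n t) : ℝ)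

/-- Geodesic torsion `τ_g = ⟪g', n⟫`. -/
def geodTors (x n : ℝ → E3) : ℝ → ℝ := fun t => (inner ℝ (deriv (gvec x n) t) (n t) : ℝ)

/-- A unit-speed smooth curve `x` on an oriented surface, encoded by a smooth unit
normal field `n` along `x` orthogonal to the tangent. -/
def IsDarbouxCurve (x n : ℝ → E3) : Prop :=
  ContDiff ℝ (⊤ : ℕ∞) x ∧ ContDiff ℝ (⊤ : ℕ∞) n ∧ (∀ t, ‖deriv x t‖ = 1) ∧ (∀ t, ‖n t‖ = 1) ∧
    ∀ t, (inner ℝ (n t) (deriv x t) : ℝ) = 0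

/-- `{x, x₁}` is a Bertrand D-pair with constant `lam ≠ 0`, smooth increasing
correspondence `s` and smooth angle function `θ`. -/
def IsBertrandDPair (x n x₁ n₁ : ℝ → E3) (lam : ℝ) (s θ : ℝ → ℝ) : Prop :=
  IsDarbouxCurve x n ∧ IsDarbouxCurve x₁ n₁ ∧ lam ≠ 0 ∧
    ContDiff ℝ (⊤ : ℕ∞) s ∧ (∀ t, 0 < deriv s t) ∧
    (∀ t, x (s t) = x₁ t + lam • gvec x₁ n₁ t) ∧
    (∀ t, gvec x n (s t) = gvec x₁ n₁ t) ∧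
    ContDiff ℝ (⊤ : ℕ∞) θ ∧
    (∀ t, deriv x (s t) = Real.cos (θ t) • deriv x₁ t - Real.sin (θ t) • n₁ t) ∧
    (∀ t, n (s t) = Real.sin (θ t) • deriv x₁ t + Real.cos (θ t) • n₁ t)

lemma cross3_inner_right (a b : E3) : (inner ℝ (cross3 a b) b : ℝ) = 0 := by
  simp [cross3, PiLp.inner_apply, Fin.sum_univ_three, Matrix.cons_val_zero, Matrix.cons_val_one,
    Matrix.head_cons]
  ring

lemma contDiff_cross {f h : ℝ → E3} (hf : ContDiff ℝ ∞ f) (hh : ContDiff ℝ ∞ h) :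
    ContDiff ℝ ∞ fun t => cross3 (f t) (h t) := by
  have hf' : ∀ i, ContDiff ℝ ∞ fun t => f t i := contDiff_euclidean.mp hf
  have hh' : ∀ i, ContDiff ℝ ∞ fun t => h t i := contDiff_euclidean.mp hh
  rw [contDiff_euclidean]
  intro i
  fin_cases i <;>
    simp only [cross3, PiLp.toLp_apply, Matrix.cons_val_zero, Matrix.cons_val_one, Matrix.head_cons,
      Fin.isValue] <;>
    exact ((hf' _).mul (hh' _)).sub ((hf' _).mul (hh' _))

theorem bertrand_D_stmt_6
    (x n x₁ n₁ : ℝ → E3) (lam : ℝ) (s θ : ℝ → ℝ)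
    (hpair : IsBertrandDPair x n x₁ n₁ lam s θ) :
    ∀ t, geodCurv x n (s t) - geodCurv x₁ n₁ t = lam * (geodCurv x n (s t) * geodCurv x₁ n₁ t - geodTors x n (s t) * geodTors x₁ n₁ t) := by
  obtain ⟨hx, hx1, hlam, hs, hspos, hxeq, hgeq, hθ, hTeq, hneq⟩ := hpair
  obtain ⟨hxs, hns, hxu, hnu, hno⟩ := hx
  obtain ⟨hx1s, hn1s, hx1u, hn1u, hn1o⟩ := hx1
  intro t
  have h1top : (∞ : WithTop ℕ∞) ≠ 0 := by simp
  have hxs' : ContDiff ℝ ∞ x := hxs.of_le (by simp)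
  have hns' : ContDiff ℝ ∞ n := hns.of_le (by simp)
  have hx1s' : ContDiff ℝ ∞ x₁ := hx1s.of_le (by simp)
  have hn1s' : ContDiff ℝ ∞ n₁ := hn1s.of_le (by simp)
  have hss : ContDiff ℝ ∞ s := hs.of_le (by simp)
  have hT : ContDiff ℝ ∞ (deriv x) := (contDiff_infty_iff_deriv.mp hxs').2
  have hT1 : ContDiff ℝ ∞ (deriv x₁) := (contDiff_infty_iff_deriv.mp hx1s').2
  have hg : ContDiff ℝ ∞ (gvec x n) := contDiff_cross hns' hT
  have hg1 : ContDiff ℝ ∞ (gvec x₁ n₁) := contDiff_cross hn1s' hT1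
  have hds : HasDerivAt s (deriv s t) t := (hss.differentiable h1top t).hasDerivAt
  -- Equation A: derivative of x ∘ s = x₁ + lam • g₁
  have hA1' : HasDerivAt (x ∘ s) (deriv s t • deriv x (s t)) t :=
    HasDerivAt.scomp t ((hxs'.differentiable h1top (s t)).hasDerivAt) hds
  have hA1 : HasDerivAt (fun u => x (s u)) (deriv s t • deriv x (s t)) t := hA1'
  have hA2 : HasDerivAt (fun u => x₁ u + lam • gvec x₁ n₁ u)
      (deriv x₁ t + lam • deriv (gvec x₁ n₁) t) t :=
    ((hx1s'.differentiable h1top t).hasDerivAt).add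
      (((hg1.differentiable h1top t).hasDerivAt).const_smul lam)
  have hABfun : (fun u => x (s u)) = fun u => x₁ u + lam • gvec x₁ n₁ u := funext hxeq
  have EqA : deriv s t • deriv x (s t) = deriv x₁ t + lam • deriv (gvec x₁ n₁) t :=
    (hABfun ▸ hA1).unique hA2
  -- Equation B: derivative of g ∘ s = g₁
  have hB1' : HasDerivAt (gvec x n ∘ s) (deriv s t • deriv (gvec x n) (s t)) t :=
    HasDerivAt.scomp t ((hg.differentiable h1top (s t)).hasDerivAt) hds
  have hB1 : HasDerivAt (fun u => gvec x n (s u)) (deriv s t • deriv (gvec x n) (s t)) t := hB1'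
  have hBfun : (fun u => gvec x n (s u)) = gvec x₁ n₁ := funext hgeq
  have EqB : deriv s t • deriv (gvec x n) (s t) = deriv (gvec x₁ n₁) t :=
    (hBfun ▸ hB1).unique ((hg1.differentiable h1top t).hasDerivAt)
  -- basic inner products
  have iT1T1 : (inner ℝ (deriv x₁ t) (deriv x₁ t) : ℝ) = 1 := by
    rw [real_inner_self_eq_norm_mul_norm, hx1u t]; norm_num
  have in1T1 : (inner ℝ (n₁ t) (deriv x₁ t) : ℝ) = 0 := hn1o t
  have iT1n1 : (inner ℝ (deriv x₁ t) (n₁ t) : ℝ) = 0 := by rw [real_inner_comm]; exact in1T1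
  have in1n1 : (inner ℝ (n₁ t) (n₁ t) : ℝ) = 1 := by
    rw [real_inner_self_eq_norm_mul_norm, hn1u t]; norm_num
  -- ⟪g₁', T₁⟫ = -k_{g₁}
  have key1 : (inner ℝ (gvec x₁ n₁ t) (deriv (deriv x₁) t) : ℝ)
      + (inner ℝ (deriv (gvec x₁ n₁) t) (deriv x₁ t) : ℝ) = 0 := by
    have hz : deriv (fun u => (inner ℝ (gvec x₁ n₁ u) (deriv x₁ u) : ℝ)) t = 0 := by
      rw [show (fun u => (inner ℝ (gvec x₁ n₁ u) (deriv x₁ u) : ℝ)) = fun _ => (0 : ℝ) from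
        funext fun u => cross3_inner_right _ _]
      simp
    rwa [deriv_inner_apply (𝕜 := ℝ) ((hg1.differentiable h1top).differentiableAt)
      ((hT1.differentiable h1top).differentiableAt)] at hz
  have ig1T1 : (inner ℝ (deriv (gvec x₁ n₁) t) (deriv x₁ t) : ℝ) = - geodCurv x₁ n₁ t := by
    have hc : (inner ℝ (gvec x₁ n₁ t) (deriv (deriv x₁) t) : ℝ) = geodCurv x₁ n₁ t := by
      rw [geodCurv, real_inner_comm]
    linarith
  -- ⟪g', T⟫ = -k_g at s t
  have key2 : (inner ℝ (gvec x n (s t)) (deriv (deriv x) (s t)) : ℝ)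
      + (inner ℝ (deriv (gvec x n) (s t)) (deriv x (s t)) : ℝ) = 0 := by
    have hz : deriv (fun u => (inner ℝ (gvec x n u) (deriv x u) : ℝ)) (s t) = 0 := by
      rw [show (fun u => (inner ℝ (gvec x n u) (deriv x u) : ℝ)) = fun _ => (0 : ℝ) from
        funext fun u => cross3_inner_right _ _]
      simp
    rwa [deriv_inner_apply (𝕜 := ℝ) ((hg.differentiable h1top).differentiableAt)
      ((hT.differentiable h1top).differentiableAt)] at hz
  have igTa : (inner ℝ (deriv (gvec x n) (s t)) (deriv x (s t)) : ℝ) = - geodCurv x n (s t) := by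
    have hc : (inner ℝ (gvec x n (s t)) (deriv (deriv x) (s t)) : ℝ) = geodCurv x n (s t) := by
      rw [geodCurv, real_inner_comm]
    linarith
  have itors1 : (inner ℝ (deriv (gvec x₁ n₁) t) (n₁ t) : ℝ) = geodTors x₁ n₁ t := rfl
  have itors : (inner ℝ (deriv (gvec x n) (s t)) (n (s t)) : ℝ) = geodTors x n (s t) := rfl
  -- scalar equation H1 (inner EqA with T₁)
  have H1 : deriv s t * Real.cos (θ t) = 1 - lam * geodCurv x₁ n₁ t := by
    have h := congrArg (fun v : E3 => (inner ℝ v (deriv x₁ t) : ℝ)) EqA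
    simp only [hTeq t, inner_add_left, inner_sub_left, real_inner_smul_left] at h
    rw [iT1T1, in1T1, ig1T1] at h
    linarith
  -- scalar equation H2 (inner EqA with n₁)
  have H2 : deriv s t * Real.sin (θ t) = -(lam * geodTors x₁ n₁ t) := by
    have h := congrArg (fun v : E3 => (inner ℝ v (n₁ t) : ℝ)) EqA
    simp only [hTeq t, inner_add_left, inner_sub_left, real_inner_smul_left] at h
    rw [iT1n1, in1n1, itors1] at h
    linarith
  -- scalar equation H3 (inner EqB with T at s t)
  have H3 : deriv s t * geodCurv x n (s t)
      = Real.cos (θ t) * geodCurv x₁ n₁ t + Real.sin (θ t) * geodTors x₁ n₁ t := by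
    have h := congrArg (fun v : E3 => (inner ℝ v (deriv x (s t)) : ℝ)) EqB
    simp only [real_inner_smul_left] at h
    rw [igTa, hTeq t, inner_sub_right, real_inner_smul_right, real_inner_smul_right,
      ig1T1, itors1] at h
    linarith
  -- scalar equation H4 (inner EqB with n at s t)
  have H4 : deriv s t * geodTors x n (s t)
      = -(Real.sin (θ t) * geodCurv x₁ n₁ t) + Real.cos (θ t) * geodTors x₁ n₁ t := by
    have h := congrArg (fun v : E3 => (inner ℝ v (n (s t)) : ℝ)) EqB
    simp only [real_inner_smul_left] at h
    rw [itors, hneq t, inner_add_right, real_inner_smul_right, real_inner_smul_right,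
      ig1T1, itors1] at h
    linarith
  have H5 : Real.sin (θ t) ^ 2 + Real.cos (θ t) ^ 2 = 1 := Real.sin_sq_add_cos_sq (θ t)
  linear_combination (- geodCurv x n (s t)) * H1 + geodTors x n (s t) * H2
    + Real.cos (θ t) * H3 - Real.sin (θ t) * H4 + geodCurv x₁ n₁ t * H5
end
end

section
/- Let {x, x₁} be a Bertrand D-pair with constant λ ≠ 0, correspondence s and angle function θ. Then for every s₁ one has k_g(s(s₁)) · s'(s₁) = k_{g₁}(s₁) cos θ(s₁) + τ_{g₁}(s₁) sin θ(s₁). -/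
noncomputable section

lemma inner_cross3_left (a b : E3) : (inner ℝ a (cross3 a b) : ℝ) = 0 := by
  simp [cross3, PiLp.inner_apply, Fin.sum_univ_three, RCLike.inner_apply]; ring
lemma inner_cross3_right (a b : E3) : (inner ℝ b (cross3 a b) : ℝ) = 0 := by
  simp [cross3, PiLp.inner_apply, Fin.sum_univ_three, RCLike.inner_apply]; ring
lemma contDiff_cross3 {f h : ℝ → E3} (hf : ContDiff ℝ ((⊤:ℕ∞) : WithTop ℕ∞) f) (hh : ContDiff ℝ ((⊤:ℕ∞) : WithTop ℕ∞) h) :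
    ContDiff ℝ ((⊤:ℕ∞) : WithTop ℕ∞) (fun t => cross3 (f t) (h t)) := by
  have hfc : ∀ i, ContDiff ℝ ((⊤:ℕ∞) : WithTop ℕ∞) (fun t => f t i) := fun i => contDiff_euclidean.mp hf i
  have hhc : ∀ i, ContDiff ℝ ((⊤:ℕ∞) : WithTop ℕ∞) (fun t => h t i) := fun i => contDiff_euclidean.mp hh i
  rw [contDiff_euclidean]
  intro i
  fin_cases i <;> simp [cross3] <;>
    exact (((hfc _).mul (hhc _)).sub ((hfc _).mul (hhc _)))

theorem bertrand_D_stmt_12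
    (x n x₁ n₁ : ℝ → E3) (lam : ℝ) (s θ : ℝ → ℝ)
    (hpair : IsBertrandDPair x n x₁ n₁ lam s θ) :
    ∀ t, geodCurv x n (s t) * deriv s t = geodCurv x₁ n₁ t * Real.cos (θ t) + geodTors x₁ n₁ t * Real.sin (θ t) := by
  obtain ⟨hxd, hx₁d, -, hs, hs', -, hg, hθ, hT, -⟩ := hpair
  have hx : ContDiff ℝ ((⊤:ℕ∞) : WithTop ℕ∞) x := hxd.1.of_le (by simp)
  have hx₁ : ContDiff ℝ ((⊤:ℕ∞) : WithTop ℕ∞) x₁ := hx₁d.1.of_le (by simp)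
  have hn₁ : ContDiff ℝ ((⊤:ℕ∞) : WithTop ℕ∞) n₁ := hx₁d.2.1.of_le (by simp)
  have hθ' : ContDiff ℝ ((⊤:ℕ∞) : WithTop ℕ∞) θ := hθ.of_le (by simp)
  have hs'' : ContDiff ℝ ((⊤:ℕ∞) : WithTop ℕ∞) s := hs.of_le (by simp)
  have hT₁s : ContDiff ℝ ((⊤:ℕ∞) : WithTop ℕ∞) (deriv x₁) := (contDiff_infty_iff_deriv.mp hx₁).2
  have hg₁s : ContDiff ℝ ((⊤:ℕ∞) : WithTop ℕ∞) (gvec x₁ n₁) := contDiff_cross3 hn₁ hT₁s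
  have hx's : ContDiff ℝ ((⊤:ℕ∞) : WithTop ℕ∞) (deriv x) := (contDiff_infty_iff_deriv.mp hx).2
  have hx''d : Differentiable ℝ (deriv (deriv x)) :=
    ((contDiff_infty_iff_deriv.mp hx's).2).differentiable (by simp)
  intro t
  have hcos : HasDerivAt (fun u => Real.cos (θ u)) (-Real.sin (θ t) * deriv θ t) t :=
    ((hθ'.differentiable (by simp) t).hasDerivAt).cos
  have hsin : HasDerivAt (fun u => Real.sin (θ u)) (Real.cos (θ t) * deriv θ t) t :=
    ((hθ'.differentiable (by simp) t).hasDerivAt).sin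
  have hT₁ : HasDerivAt (deriv x₁) (deriv (deriv x₁) t) t :=
    (hT₁s.differentiable (by simp) t).hasDerivAt
  have hn₁' : HasDerivAt n₁ (deriv n₁ t) t := (hn₁.differentiable (by simp) t).hasDerivAt
  have hg₁' : HasDerivAt (gvec x₁ n₁) (deriv (gvec x₁ n₁) t) t :=
    (hg₁s.differentiable (by simp) t).hasDerivAt
  -- LHS composition derivative
  have hF1 : HasDerivAt (deriv x ∘ s) (deriv s t • deriv (deriv x) (s t)) t :=
    ((hx's.differentiable (by simp) (s t)).hasDerivAt).scomp t
      (hs''.differentiable (by simp) t).hasDerivAt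
  -- RHS derivative
  have hF2 : HasDerivAt (fun u => Real.cos (θ u) • deriv x₁ u - Real.sin (θ u) • n₁ u)
      (Real.cos (θ t) • deriv (deriv x₁) t + (-Real.sin (θ t) * deriv θ t) • deriv x₁ t -
        (Real.sin (θ t) • deriv n₁ t + (Real.cos (θ t) * deriv θ t) • n₁ t)) t :=
    (hcos.smul hT₁).sub (hsin.smul hn₁')
  have hfun : (deriv x ∘ s) =
      (fun u => Real.cos (θ u) • deriv x₁ u - Real.sin (θ u) • n₁ u) := funext hT
  rw [hfun] at hF1
  have key := hF1.unique hF2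
  -- pointwise orthogonality of n₁ and g₁, differentiated
  have horth : (fun u => (inner ℝ (n₁ u) (gvec x₁ n₁ u) : ℝ)) = fun _ => (0:ℝ) := by
    funext u; exact inner_cross3_left _ _
  have hzero : HasDerivAt (fun u => (inner ℝ (n₁ u) (gvec x₁ n₁ u) : ℝ))
      ((inner ℝ (n₁ t) (deriv (gvec x₁ n₁) t) : ℝ) + inner ℝ (deriv n₁ t) (gvec x₁ n₁ t)) t :=
    hn₁'.inner ℝ hg₁'
  rw [horth] at hzero
  have hsum : (inner ℝ (n₁ t) (deriv (gvec x₁ n₁) t) : ℝ) + inner ℝ (deriv n₁ t) (gvec x₁ n₁ t) = 0 :=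
    hzero.unique (hasDerivAt_const t 0)
  have hng : (inner ℝ (deriv n₁ t) (gvec x₁ n₁ t) : ℝ) = - geodTors x₁ n₁ t := by
    have : (inner ℝ (n₁ t) (deriv (gvec x₁ n₁) t) : ℝ) = geodTors x₁ n₁ t := by
      rw [geodTors, real_inner_comm]
    linarith [hsum, this]
  have hTg : (inner ℝ (deriv x₁ t) (gvec x₁ n₁ t) : ℝ) = 0 := inner_cross3_right _ _
  have hnng : (inner ℝ (n₁ t) (gvec x₁ n₁ t) : ℝ) = 0 := inner_cross3_left _ _
  calc geodCurv x n (s t) * deriv s t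
      = inner ℝ (deriv s t • deriv (deriv x) (s t)) (gvec x₁ n₁ t) := by
        rw [geodCurv, hg t, real_inner_smul_left]; ring
    _ = inner ℝ (Real.cos (θ t) • deriv (deriv x₁) t + (-Real.sin (θ t) * deriv θ t) • deriv x₁ t -
        (Real.sin (θ t) • deriv n₁ t + (Real.cos (θ t) * deriv θ t) • n₁ t)) (gvec x₁ n₁ t) := by
        rw [key]
    _ = geodCurv x₁ n₁ t * Real.cos (θ t) + geodTors x₁ n₁ t * Real.sin (θ t) := by
        rw [inner_sub_left, inner_add_left, inner_add_left, real_inner_smul_left,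
          real_inner_smul_left, real_inner_smul_left, real_inner_smul_left,
          hTg, hnng, hng, geodCurv]
        ring
end
end
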